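/- arXiv:2109.10749 — 2 statements merged into one kernel-verified Lean document; each statement's English description precedes it below -/
import Mathlib

section
/- Let t_0 > 0, t_i ≥ 0 for all i ≥ 1, and suppose t_k > 0 for some k ≥ 1. Define λ(r, 0) = Σ_{i=0}^{r} binom(r, i) t_i. Then for every n ≥ 1, the partial products Π_{r even, n ≤ r ≤ s} λ(r−1, 0)/λ(r, 0) tend to 0 as s → ∞. (This is the core of the claim that in an Alternating CSG model with t_k > 0 for some k > 0, every element almost surely acquires an element to its future, and, by the analogous statement for odd r, an element to its past.) -/
/-- `lam t r = λ(r, 0) = Σ_{i=0}^{r} C(r, i) t_i`. -/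
noncomputable def lam (t : ℕ → ℝ) (r : ℕ) : ℝ :=
  ∑ i ∈ Finset.range (r + 1), (r.choose i : ℝ) * t i

lemma lam_pos (t : ℕ → ℝ) (ht0 : 0 < t 0) (ht : ∀ i, 0 ≤ t i) (r : ℕ) : 0 < lam t r := by
  have h0 : (0:ℝ) < (r.choose 0 : ℝ) * t 0 := by simpa using ht0
  have := Finset.single_le_sum (f := fun i => (r.choose i : ℝ) * t i)
    (fun i _ => mul_nonneg (by positivity) (ht i)) (by simp : 0 ∈ Finset.range (r+1))
  simp only [Nat.choose_zero_right, Nat.cast_one, one_mul] at this h0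
  unfold lam
  linarith

lemma lam_le_succ (t : ℕ → ℝ) (ht : ∀ i, 0 ≤ t i) (r : ℕ) : lam t r ≤ lam t (r+1) := by
  unfold lam
  have h1 : ∑ i ∈ Finset.range (r+1), (r.choose i : ℝ) * t i
      ≤ ∑ i ∈ Finset.range (r+1), ((r+1).choose i : ℝ) * t i :=
    Finset.sum_le_sum fun i _ => mul_le_mul_of_nonneg_right
      (by exact_mod_cast Nat.choose_le_choose i (Nat.le_succ r)) (ht i)
  have h2 : ∑ i ∈ Finset.range (r+1), ((r+1).choose i : ℝ) * t i
      ≤ ∑ i ∈ Finset.range (r+1+1), ((r+1).choose i : ℝ) * t i := by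
    apply Finset.sum_le_sum_of_subset_of_nonneg
    · exact Finset.range_subset_range.2 (by omega)
    · intro i _ _; exact mul_nonneg (by positivity) (ht i)
  linarith

lemma lam_key (t : ℕ → ℝ) (ht0 : 0 < t 0) (ht : ∀ i, 0 ≤ t i) (k : ℕ) (hk : 1 ≤ k)
    (htk : 0 < t k) (r : ℕ) (hr : k ≤ r) :
    lam t (r-1) / lam t r ≤ 1 - (t k / (t 0 + t k)) / r := by
  obtain ⟨m, rfl⟩ : ∃ m, r = m + 1 := ⟨r - 1, by omega⟩
  set c := t k / (t 0 + t k) with hc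
  have hden : (0:ℝ) < t 0 + t k := by linarith
  have hLpos := lam_pos t ht0 ht (m+1)
  set S := ∑ i ∈ Finset.range (m+2), (i:ℝ) * (((m+1).choose i : ℕ) : ℝ) * t i with hS
  -- (i)  (m+1) * lam t m = (m+1) * lam t (m+1) - S
  have hi : ((m:ℝ)+1) * lam t m = ((m:ℝ)+1) * lam t (m+1) - S := by
    have e : ((m:ℝ)+1) * lam t (m+1) - S
        = ∑ i ∈ Finset.range (m+2), (((m:ℝ)+1) - i) * (((m+1).choose i : ℕ) : ℝ) * t i := by
      rw [lam, Finset.mul_sum, ← Finset.sum_sub_distrib]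
      exact Finset.sum_congr rfl fun i _ => by ring
    rw [e, Finset.sum_range_succ]
    have hz : (((m:ℝ)+1) - ((m+1 : ℕ):ℝ)) * (((m+1).choose (m+1) : ℕ) : ℝ) * t (m+1) = 0 := by
      push_cast; ring
    rw [hz, add_zero, lam, Finset.mul_sum]
    apply Finset.sum_congr rfl
    intro i hi'
    have him : i ≤ m := Nat.lt_succ_iff.mp (Finset.mem_range.mp hi')
    have h := Nat.choose_mul_succ_eq m i
    have h2 : ((m.choose i : ℕ) : ℝ) * ((m:ℝ)+1)
        = (((m+1).choose i : ℕ) : ℝ) * (((m:ℝ)+1) - i) := by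
      have := congrArg (Nat.cast : ℕ → ℝ) h
      push_cast [Nat.cast_sub (by omega : i ≤ m+1)] at this
      linarith
    linear_combination (t i) * h2
  -- (ii) lam t (m+1) - t 0 ≤ S
  have hii : lam t (m+1) - t 0 ≤ S := by
    have e1 : lam t (m+1)
        = (∑ i ∈ Finset.range (m+1), (((m+1).choose (i+1) : ℕ) : ℝ) * t (i+1)) + t 0 := by
      rw [lam, Finset.sum_range_succ']; simp
    have e2 : S = (∑ i ∈ Finset.range (m+1),
        ((i:ℝ)+1) * (((m+1).choose (i+1) : ℕ) : ℝ) * t (i+1)) + 0 := by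
      rw [hS, Finset.sum_range_succ']
      push_cast
      simp
    have hterm : ∀ i ∈ Finset.range (m+1),
        (((m+1).choose (i+1) : ℕ) : ℝ) * t (i+1)
          ≤ ((i:ℝ)+1) * (((m+1).choose (i+1) : ℕ) : ℝ) * t (i+1) := by
      intro i _
      have h1 : (((m+1).choose (i+1) : ℕ) : ℝ) ≤ ((i:ℝ)+1) * (((m+1).choose (i+1) : ℕ) : ℝ) := by
        nlinarith [Nat.cast_nonneg (α := ℝ) ((m+1).choose (i+1)), Nat.cast_nonneg (α := ℝ) i]
      exact mul_le_mul_of_nonneg_right h1 (ht (i+1))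
    have := Finset.sum_le_sum hterm
    rw [e1, e2]
    linarith
  -- (iii) t 0 + t k ≤ lam t (m+1)
  have hiii : t 0 + t k ≤ lam t (m+1) := by
    have hsub : ({0, k} : Finset ℕ) ⊆ Finset.range (m+2) := by
      intro x hx
      simp only [Finset.mem_insert, Finset.mem_singleton] at hx
      rcases hx with rfl | rfl <;> simp <;> omega
    have hsum := Finset.sum_le_sum_of_subset_of_nonneg hsub
      (f := fun i => (((m+1).choose i : ℕ) : ℝ) * t i)
      (fun i _ _ => mul_nonneg (by positivity) (ht i))
    rw [Finset.sum_pair (by omega : (0:ℕ) ≠ k)] at hsum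
    have h0 : (((m+1).choose 0 : ℕ) : ℝ) * t 0 = t 0 := by simp
    have hk' : t k ≤ (((m+1).choose k : ℕ) : ℝ) * t k := by
      have : (1:ℝ) ≤ (((m+1).choose k : ℕ) : ℝ) := by
        exact_mod_cast Nat.succ_le_of_lt (Nat.choose_pos (by omega : k ≤ m+1))
      nlinarith [ht k]
    rw [lam]
    rw [h0] at hsum
    linarith
  -- (iv) c * lam ≤ S
  have hc_eq : c * (t 0 + t k) = t k := by rw [hc]; field_simp
  have h1c : (1 - c) * (t 0 + t k) = t 0 := by linarith
  have h1cpos : 0 < 1 - c := by nlinarith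
  have hcS : c * lam t (m+1) ≤ S := by nlinarith
  -- conclude
  have hm1 : (0:ℝ) < (m:ℝ)+1 := by positivity
  have hgoalcast : ((m+1 : ℕ):ℝ) = (m:ℝ)+1 := by push_cast; ring
  have hred : (m + 1 - 1 : ℕ) = m := by omega
  rw [hred, div_le_iff₀ hLpos, hgoalcast]
  have e : (1 - c/((m:ℝ)+1)) * lam t (m+1)
      = (((m:ℝ)+1) * lam t (m+1) - c * lam t (m+1)) / ((m:ℝ)+1) := by
    field_simp
  rw [e, le_div_iff₀ hm1]
  nlinarith [hi, hcS]

lemma harmonic_even (m : ℕ) (hm : 1 ≤ m) :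
    Filter.Tendsto (fun s => ∑ r ∈ (Finset.Icc m s).filter (fun r => Even r), (1:ℝ)/r)
      Filter.atTop Filter.atTop := by
  set f : ℕ → ℝ := fun r => (1:ℝ)/r with hf
  have hfnn : ∀ r, 0 ≤ f r := fun r => by positivity
  -- H s = ∑_{r ∈ Ioc 0 s} f r
  have hH : ∀ s : ℕ, (∑ i ∈ Finset.range s, (1:ℝ)/((i:ℝ)+1)) = ∑ r ∈ Finset.Ioc 0 s, f r := by
    intro s
    induction s with
    | zero => simp
    | succ s ih =>
      rw [Finset.sum_range_succ, ih, Finset.sum_Ioc_succ_top (by omega)]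
      push_cast [hf]
      ring_nf
  -- main inequality : ∑_{Ioc m s} f ≤ 2 * ∑_{even, Icc m s} f
  have hkey : ∀ s : ℕ, m ≤ s →
      (∑ r ∈ Finset.Ioc m s, f r) ≤ 2 * ∑ r ∈ (Finset.Icc m s).filter (fun r => Even r), f r := by
    intro s hs
    set A := (Finset.Icc m s).filter (fun r => Even r) with hA
    have hsplit := Finset.sum_filter_add_sum_filter_not (Finset.Ioc m s) (fun r => Even r) f
    have h1 : (∑ r ∈ (Finset.Ioc m s).filter (fun r => Even r), f r) ≤ ∑ r ∈ A, f r := by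
      apply Finset.sum_le_sum_of_subset_of_nonneg
      · apply Finset.filter_subset_filter
        intro x hx
        simp only [Finset.mem_Ioc] at hx
        simp only [Finset.mem_Icc]
        omega
      · intro i _ _; exact hfnn i
    have h2 : (∑ r ∈ (Finset.Ioc m s).filter (fun r => ¬ Even r), f r) ≤ ∑ r ∈ A, f r := by
      set O := (Finset.Ioc m s).filter (fun r => ¬ Even r) with hO
      have step1 : (∑ r ∈ O, f r) ≤ ∑ r ∈ O, f (r - 1) := by
        apply Finset.sum_le_sum
        intro r hrO
        have hr : m < r ∧ r ≤ s := by
          have := Finset.mem_filter.mp hrO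
          simpa [Finset.mem_Ioc] using this.1
        have hr2 : 2 ≤ r := by omega
        rw [hf]
        apply one_div_le_one_div_of_le
        · have : (1:ℕ) ≤ r - 1 := by omega
          exact_mod_cast Nat.lt_of_lt_of_le Nat.zero_lt_one this
        · exact_mod_cast Nat.sub_le r 1
      have step2 : (∑ r ∈ O, f (r - 1)) = ∑ x ∈ O.image (fun r => r - 1), f x := by
        rw [Finset.sum_image]
        intro x hx y hy hxy
        have hx' : m < x := by
          have := Finset.mem_filter.mp hx
          have := Finset.mem_Ioc.mp this.1
          omega
        have hy' : m < y := by
          have := Finset.mem_filter.mp hy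
          have := Finset.mem_Ioc.mp this.1
          omega
        simp only at hxy
        omega
      have step3 : (∑ x ∈ O.image (fun r => r - 1), f x) ≤ ∑ r ∈ A, f r := by
        apply Finset.sum_le_sum_of_subset_of_nonneg
        · intro x hx
          obtain ⟨r, hrO, rfl⟩ := Finset.mem_image.mp hx
          have hmem := Finset.mem_filter.mp hrO
          have hio := Finset.mem_Ioc.mp hmem.1
          have hodd : ¬ Even r := hmem.2
          rw [hA, Finset.mem_filter, Finset.mem_Icc]
          constructor
          · omega
          · rcases Nat.even_or_odd r with he | ho
            · exact absurd he hodd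
            · obtain ⟨j, hj⟩ := ho
              have : r - 1 = 2 * j := by omega
              exact ⟨j, by omega⟩
        · intro i _ _; exact hfnn i
      linarith
    linarith
  -- lower bound tendsto atTop
  have hC : Filter.Tendsto
      (fun s => ((∑ i ∈ Finset.range s, (1:ℝ)/((i:ℝ)+1)) + -(∑ r ∈ Finset.Ioc 0 m, f r)) / 2)
      Filter.atTop Filter.atTop := by
    apply Filter.Tendsto.atTop_div_const (by norm_num : (0:ℝ) < 2)
    exact Filter.tendsto_atTop_add_const_right _ _ Real.tendsto_sum_range_one_div_nat_succ_atTop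
  apply Filter.tendsto_atTop_mono' _ _ hC
  filter_upwards [Filter.eventually_ge_atTop m] with s hs
  have hcons := Finset.sum_Ioc_consecutive f (Nat.zero_le m) hs
  have := hkey s hs
  rw [hH s]
  linarith

/-- with `t_0 > 0`, `t_i ≥ 0`, and `t_k > 0` for some `k ≥ 1`, for every
`n ≥ 1` the partial products `Π_{r even, n ≤ r ≤ s} λ(r-1,0)/λ(r,0)` tend to `0` as
`s → ∞`. -/
theorem stmt_7 (t : ℕ → ℝ) (ht0 : 0 < t 0) (ht : ∀ i : ℕ, 0 ≤ t i)
    (k : ℕ) (hk : 1 ≤ k) (htk : 0 < t k) (n : ℕ) (hn : 1 ≤ n) :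
    Filter.Tendsto
      (fun s : ℕ => ∏ r ∈ (Finset.Icc n s).filter (fun r => Even r),
        lam t (r - 1) / lam t r)
      Filter.atTop (nhds 0) := by
  set c := t k / (t 0 + t k) with hc
  have hden : (0:ℝ) < t 0 + t k := by linarith
  have hcpos : 0 < c := div_pos htk hden
  set m := max n k with hm
  have hm1 : 1 ≤ m := le_trans hn (le_max_left _ _)
  have hmk : k ≤ m := le_max_right _ _
  have hmn : n ≤ m := le_max_left _ _
  have hrat_nn : ∀ r : ℕ, 0 ≤ lam t (r-1) / lam t r :=
    fun r => div_nonneg (lam_pos t ht0 ht (r-1)).le (lam_pos t ht0 ht r).le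
  have hrat_le1 : ∀ r : ℕ, 1 ≤ r → lam t (r-1) / lam t r ≤ 1 := by
    intro r hr
    rw [div_le_one (lam_pos t ht0 ht r)]
    obtain ⟨j, rfl⟩ : ∃ j, r = j + 1 := ⟨r - 1, by omega⟩
    simpa using lam_le_succ t ht j
  -- upper bound tendsto 0
  have hg := harmonic_even m hm1
  have hexp : Filter.Tendsto
      (fun s : ℕ => Real.exp (-(c * ∑ r ∈ (Finset.Icc m s).filter (fun r => Even r), (1:ℝ)/r)))
      Filter.atTop (nhds 0) := by
    have h1 := hg.const_mul_atTop hcpos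
    have h2 := Filter.tendsto_neg_atTop_atBot.comp h1
    exact Real.tendsto_exp_atBot.comp h2
  apply tendsto_of_tendsto_of_tendsto_of_le_of_le tendsto_const_nhds hexp
  · intro s
    exact Finset.prod_nonneg fun r _ => hrat_nn r
  · intro s
    set B := (Finset.Icc m s).filter (fun r => Even r) with hB
    set A := (Finset.Icc n s).filter (fun r => Even r) with hA
    have hsub : B ⊆ A :=
      Finset.filter_subset_filter _ (Finset.Icc_subset_Icc hmn le_rfl)
    -- step 1 : prod over A ≤ prod over B
    have hstep1 : (∏ r ∈ A, lam t (r-1) / lam t r) ≤ ∏ r ∈ B, lam t (r-1) / lam t r := by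
      rw [← Finset.prod_sdiff hsub]
      have hle1 : (∏ r ∈ A \ B, lam t (r-1) / lam t r) ≤ 1 := by
        apply Finset.prod_le_one (fun r _ => hrat_nn r)
        intro r hr
        have hr' : r ∈ A := Finset.mem_sdiff.mp hr |>.1
        have : n ≤ r := (Finset.mem_Icc.mp (Finset.mem_filter.mp hr').1).1
        exact hrat_le1 r (by omega)
      have hBnn : (0:ℝ) ≤ ∏ r ∈ B, lam t (r-1) / lam t r :=
        Finset.prod_nonneg fun r _ => hrat_nn r
      nlinarith
    -- step 2 : prod over B ≤ exp(-c Σ 1/r)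
    have hstep2 : (∏ r ∈ B, lam t (r-1) / lam t r)
        ≤ Real.exp (-(c * ∑ r ∈ B, (1:ℝ)/r)) := by
      have e : Real.exp (-(c * ∑ r ∈ B, (1:ℝ)/r)) = ∏ r ∈ B, Real.exp (-(c * (1/(r:ℝ)))) := by
        rw [← Real.exp_sum]
        congr 1
        rw [Finset.mul_sum, ← Finset.sum_neg_distrib]
      rw [e]
      apply Finset.prod_le_prod (fun r _ => hrat_nn r)
      intro r hrB
      have hrIcc := Finset.mem_Icc.mp (Finset.mem_filter.mp hrB).1
      have hrk : k ≤ r := le_trans hmk hrIcc.1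
      have hbound := lam_key t ht0 ht k hk htk r hrk
      have hexp' := Real.add_one_le_exp (-(c * (1/(r:ℝ))))
      have : c / (r:ℝ) = c * (1/(r:ℝ)) := by ring
      rw [← hc] at hbound
      linarith [hbound, hexp', this ▸ hbound]
    exact le_trans hstep1 hstep2
end

section
/- Let t_0 > 0, t_i ≥ 0 for all i ≥ 1, and suppose t_k > 0 for some k ≥ 1. Define λ(r, 0) = Σ_{i=0}^{r} binom(r, i) t_i and the effective parameter p_r = 1 − λ(r−1, 0)/λ(r, 0). Then for every r ≥ k, p_r ≥ (1/r) · t_k/(t_0 + t_k). -/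
lemma lam_succ (t : ℕ → ℝ) (m : ℕ) :
    lam t (m+1) = lam t m + ∑ l ∈ Finset.range (m+1), (m.choose l : ℝ) * t (l+1) := by
  unfold lam
  rw [Finset.sum_range_succ' (fun i => (((m+1).choose i : ℝ)) * t i) (m+1),
      Finset.sum_range_succ' (fun i => ((m.choose i : ℝ)) * t i) m]
  have h1 : ∀ i : ℕ, (((m+1).choose (i+1) : ℕ) : ℝ) = (m.choose i : ℝ) + (m.choose (i+1) : ℝ) := by
    intro i
    rw [Nat.choose_succ_succ]
    push_cast
    ring
  simp only [h1, add_mul]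
  rw [Finset.sum_add_distrib]
  have h2 : ∑ i ∈ Finset.range (m+1), (m.choose (i+1) : ℝ) * t (i+1)
      = ∑ i ∈ Finset.range m, (m.choose (i+1) : ℝ) * t (i+1) := by
    rw [Finset.sum_range_succ]
    simp
  rw [h2]
  simp [Nat.choose_zero_right]
  ring

/-- with `t_0 > 0`, `t_i ≥ 0`, `t_k > 0` for some `k ≥ 1`, the effective
parameter `p_r = 1 - λ(r-1,0)/λ(r,0)` satisfies `p_r ≥ (1/r) · t_k/(t_0 + t_k)` for
all `r ≥ k`. -/
theorem stmt_8 (t : ℕ → ℝ) (ht0 : 0 < t 0) (ht : ∀ i : ℕ, 0 ≤ t i)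
    (k : ℕ) (hk : 1 ≤ k) (htk : 0 < t k) (r : ℕ) (hr : k ≤ r) :
    (1 / (r : ℝ)) * (t k / (t 0 + t k)) ≤ 1 - lam t (r - 1) / lam t r := by
  obtain ⟨m, rfl⟩ : ∃ m, r = m + 1 := ⟨r - 1, by omega⟩
  set D := ∑ l ∈ Finset.range (m+1), (m.choose l : ℝ) * t (l+1) with hD
  set S := ∑ l ∈ Finset.range (m+1), ((m+1).choose (l+1) : ℝ) * t (l+1) with hS
  -- lam t (m+1) = t 0 + S
  have hlam : lam t (m+1) = t 0 + S := by
    unfold lam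
    rw [Finset.sum_range_succ' (fun i => (((m+1).choose i : ℝ)) * t i) (m+1)]
    simp [hS, add_comm]
  -- S ≥ t k
  have hSk : t k ≤ S := by
    have hmem : k - 1 ∈ Finset.range (m+1) := Finset.mem_range.mpr (by omega)
    have hterm : t k ≤ ((m+1).choose (k-1+1) : ℝ) * t (k-1+1) := by
      have hk1 : k - 1 + 1 = k := by omega
      rw [hk1]
      have : (1 : ℝ) ≤ ((m+1).choose k : ℝ) := by
        exact_mod_cast Nat.choose_pos hr
      nlinarith [ht k]
    calc t k ≤ ((m+1).choose (k-1+1) : ℝ) * t (k-1+1) := hterm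
      _ ≤ S := Finset.single_le_sum (f := fun l => ((m+1).choose (l+1) : ℝ) * t (l+1)) (fun l _ => mul_nonneg (by positivity) (ht _)) hmem
  -- (m+1) * D ≥ S
  have hDS : S ≤ (m+1 : ℝ) * D := by
    rw [hS, hD, Finset.mul_sum]
    apply Finset.sum_le_sum
    intro l _
    have hnat : ((m+1).choose (l+1)) ≤ (m+1) * m.choose l := by
      have := Nat.add_one_mul_choose_eq m l
      nlinarith [Nat.one_le_iff_ne_zero.mpr (Nat.succ_ne_zero l)]
    have : (((m+1).choose (l+1) : ℕ) : ℝ) ≤ ((m+1 : ℕ) : ℝ) * (m.choose l : ℝ) := by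
      exact_mod_cast hnat
    push_cast at this ⊢
    nlinarith [ht (l+1)]
  have hSpos : 0 < S := lt_of_lt_of_le htk hSk
  have hlampos : 0 < lam t (m+1) := by rw [hlam]; linarith
  have hmsub : (m + 1) - 1 = m := by omega
  rw [hmsub]
  have hratio : 1 - lam t m / lam t (m+1) = D / lam t (m+1) := by
    rw [lam_succ t m] at hlampos ⊢
    field_simp
    rw [hD]; ring
  rw [hratio, hlam]
  push_cast
  rw [one_div, inv_mul_eq_div, div_div, div_le_div_iff₀ (by positivity) (by linarith)]
  nlinarith [mul_pos ht0 htk, mul_nonneg (le_of_lt ht0) (le_of_lt hSpos)]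
end
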